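/- Let f, g be binary cubics over an algebraically closed field k of characteristic ≠ 2,3. Then fg = 0 or the sextic fg has a root of multiplicity at least 4 if and only if the four invariants D, R, H, I all vanish on the pair (f,g), where D = D_f D_g is the product of discriminants, R is the resultant of f and g, H is the value of the skew-symmetric SL_2-invariant bilinear form on V_3 at (f,g), and I = I_2(fg) is the quadratic invariant of the product sextic. -/

import Mathlib

open MvPolynomial
noncomputable section

/-- The binary form of degree `d` with coefficient vector `a`. -/
def toForm (k : Type*) [CommSemiring k] (d : ℕ) (a : Fin (d+1) → k) :
    MvPolynomial (Fin 2) k :=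
  ∑ i : Fin (d+1), C (a i) * X 0 ^ (d - (i : ℕ)) * X 1 ^ (i : ℕ)

/-- Coordinate change by the matrix `g` : `X ↦ g00 X + g01 Y`, `Y ↦ g10 X + g11 Y`. -/
def matAct (k : Type*) [CommSemiring k] (g : Matrix (Fin 2) (Fin 2) k)
    (p : MvPolynomial (Fin 2) k) : MvPolynomial (Fin 2) k :=
  aeval (fun j : Fin 2 => C (g j 0) * X 0 + C (g j 1) * X 1) p

/-- The coefficient of `X^(d-i) Y^i` in a binary form of degree `d`. -/
def formCoeff (k : Type*) [CommSemiring k] (d : ℕ) (p : MvPolynomial (Fin 2) k)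
    (i : Fin (d+1)) : k :=
  coeff (Finsupp.single 0 (d - (i : ℕ)) + Finsupp.single 1 (i : ℕ)) p

/-- The induced action of a `2×2` matrix on the coefficient vector of a binary form. -/
def actCoeff (k : Type*) [CommSemiring k] (d : ℕ) (g : Matrix (Fin 2) (Fin 2) k)
    (a : Fin (d+1) → k) : Fin (d+1) → k :=
  formCoeff k d (matAct k g (toForm k d a))

/-- `P ∈ k[A_0,…,A_d]` is an `SL₂(k)`-invariant. -/
def SL2Invariant (k : Type*) [CommRing k] (d : ℕ)
    (P : MvPolynomial (Fin (d+1)) k) : Prop :=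
  ∀ g : Matrix.SpecialLinearGroup (Fin 2) k, ∀ a : Fin (d+1) → k,
    eval (actCoeff k d (g : Matrix (Fin 2) (Fin 2) k) a) P = eval a P

/-- The ring `R_d` of `SL₂(k)`-invariants in `k[A_0,…,A_d]`. -/
def Rd (k : Type*) [Field k] (d : ℕ) : Subalgebra k (MvPolynomial (Fin (d+1)) k) where
  carrier := {P | SL2Invariant k d P}
  mul_mem' := fun hP hQ g a => by simp only [map_mul]; rw [hP g a, hQ g a]
  add_mem' := fun hP hQ g a => by simp only [map_add]; rw [hP g a, hQ g a]
  algebraMap_mem' := fun r g a => by simp [SL2Invariant]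
/-- The skew-symmetric `SL₂`-invariant pairing `H` on pairs of binary cubics. -/
def Hc {A : Type*} [CommRing A] (a b : Fin 4 → A) : A :=
  3 * a 0 * b 3 - a 1 * b 2 + a 2 * b 1 - 3 * a 3 * b 0

/-- The discriminant of a binary cubic. -/
def discCubic {A : Type*} [CommRing A] (a : Fin 4 → A) : A :=
  -27 * a 0^2 * a 3^2 + 18 * a 0 * a 3 * a 2 * a 1 + a 1^2 * a 2^2
    - 4 * a 1^3 * a 3 - 4 * a 2^3 * a 0

/-- `D = D_f D_g`, the product of the discriminants of the two cubics. -/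
def Dc {A : Type*} [CommRing A] (a b : Fin 4 → A) : A :=
  discCubic a * discCubic b

/-- The resultant `R` of two binary cubics. -/
def Rc {A : Type*} [CommRing A] (a b : Fin 4 → A) : A :=
  3*b 0^2*a 0*b 3*a 3^2 - b 0^3*a 3^3 + 2*b 0^2*a 3^2*b 2*a 1 - b 2^2*b 0*a 1^2*a 3
  - a 0^2*b 2^3*a 3 + b 0^2*a 2*b 1*a 3^2 - b 0^2*a 2^2*b 2*a 3 - b 1^2*b 0*a 1*a 3^2
  + a 0*b 1^3*a 3^2 - 3*b 0*a 0^2*b 3^2*a 3 - b 0*a 1^3*b 3^2 + a 0^3*b 3^3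
  + b 0^2*a 2^3*b 3 - b 0*a 0*b 3*b 2*a 1*a 3 + 3*a 0^2*b 3*b 2*b 1*a 3
  + b 0*a 3*b 3*a 0*b 1*a 2 + 3*b 0*a 0*b 3^2*a 1*a 2 - 2*a 0^2*b 3^2*b 1*a 2
  - 3*b 0*a 3^2*b 2*a 0*b 1 - 3*b 0^2*a 3*b 3*a 1*a 2 - b 2*a 1*a 0^2*b 3^2
  + b 2^2*a 1*a 0*b 1*a 3 + b 2*b 0*a 1^2*b 3*a 2 - b 2*a 1*b 3*a 0*b 1*a 2
  + a 0^2*b 2^2*a 2*b 3 + 2*b 0*a 0*b 2^2*a 2*a 3 - 2*b 0*a 0*b 2*b 3*a 2^2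
  - 2*b 1^2*a 1*a 3*a 0*b 3 + b 1*a 1^2*b 3^2*a 0 + 2*b 1*b 0*a 1^2*b 3*a 3
  + b 1*b 0*a 1*b 2*a 2*a 3 - b 1*b 0*a 1*b 3*a 2^2 - a 0*b 1^2*b 2*a 2*a 3
  + a 0*b 1^2*b 3*a 2^2

/-- The quadratic invariant `I = I₂(fg)` of the product sextic of two binary cubics. -/
def Ic {A : Type*} [CommRing A] (a b : Fin 4 → A) : A :=
  228*a 0*b 0*a 3*b 3 - 52*a 1*b 0*a 3*b 2 - 24*a 1*b 0*a 2*b 3 - 24*a 0*b 1*a 3*b 2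
  - 52*a 0*b 1*a 2*b 3 + 4*a 2*b 0*a 3*b 1 + 16*a 2^2*b 0*b 2 + 16*a 1*b 1^2*a 3
  + 4*a 1*b 1*a 2*b 2 + 16*a 1^2*b 1*b 3 + 16*a 0*b 2^2*a 2 + 4*a 0*b 2*a 1*b 3
  - 6*a 3^2*b 0^2 - 6*a 2^2*b 1^2 - 6*a 1^2*b 2^2 - 6*a 0^2*b 3^2

/-!
Both sides are unchanged by the substitutions `X ↦ X + σY` and `X ↔ Y`, under which the four
invariants are multiplied by `±1`. A root of `fg` of multiplicity at least 4 can therefore be moved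
to `Y = 0`; then `Y⁴ ∣ fg` forces the first nonzero coefficients `a_i`, `b_j` of `f` and `g` to
satisfy `i + j ≥ 4`, and every invariant vanishes on such pairs. Conversely, `D = 0` means that
one of the cubics, say `f`, has a repeated linear factor (found from its Hessian, which only needs
`2, 3 ≠ 0`). Moving that factor to `Y` and normalising gives `f = cY³` or `f = cXY²`, and then
`H = 0`, resp. `H = I = R = 0`, force `Y⁴ ∣ fg` or `X⁴ ∣ fg`.
-/

namespace BinaryCubic

variable {k : Type*}

/-- Coefficients of `f(Y, X)`. -/
def reverse (a : Fin 4 → k) : Fin 4 → k := ![a 3, a 2, a 1, a 0]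

theorem reverse_reverse (a : Fin 4 → k) : reverse (reverse a) = a := by
  ext i; fin_cases i <;> rfl

section CommSemiring

variable [CommSemiring k]

theorem formCoeff_toForm (d : ℕ) (c : Fin (d + 1) → k) : formCoeff k d (toForm k d c) = c := by
  funext i
  have hmon : ∀ j : Fin (d + 1), C (c j) * (X 0 : MvPolynomial (Fin 2) k) ^ (d - (j : ℕ)) *
      X 1 ^ (j : ℕ) =
        monomial (Finsupp.single 0 (d - (j : ℕ)) + Finsupp.single 1 (j : ℕ)) (c j) := by
    intro j
    rw [X_pow_eq_monomial, X_pow_eq_monomial, C_mul_monomial, monomial_mul, mul_one, mul_one]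
  simp only [formCoeff, toForm, hmon, coeff_sum, coeff_monomial]
  rw [Finset.sum_eq_single i (fun j _ hji => if_neg fun h => hji ?_) (by simp), if_pos rfl]
  exact Fin.ext (by simpa using congrArg (· 1) h)

theorem coeff_X_pow_mul_of_lt {σ : Type*} {i : σ} {n : ℕ} {m : σ →₀ ℕ} (hm : m i < n)
    (p : MvPolynomial σ k) : coeff m (X i ^ n * p) = 0 := by
  classical
  rw [X_pow_eq_monomial, coeff_monomial_mul', if_neg (Finsupp.single_le_iff.not.2 hm.not_ge)]

theorem toForm_three (a : Fin 4 → k) :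
    toForm k 3 a = C (a 0) * X 0 ^ 3 + C (a 1) * X 0 ^ 2 * X 1
      + C (a 2) * X 0 * X 1 ^ 2 + C (a 3) * X 1 ^ 3 := by
  simp [toForm, Fin.sum_univ_four]

theorem toForm_six (c : Fin 7 → k) :
    toForm k 6 c = C (c 0) * X 0 ^ 6 + C (c 1) * X 0 ^ 5 * X 1
      + C (c 2) * X 0 ^ 4 * X 1 ^ 2 + C (c 3) * X 0 ^ 3 * X 1 ^ 3
      + C (c 4) * X 0 ^ 2 * X 1 ^ 4 + C (c 5) * X 0 * X 1 ^ 5 + C (c 6) * X 1 ^ 6 := by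
  simp [toForm, Fin.sum_univ_seven]

def mulCoeffs (a b : Fin 4 → k) : Fin 7 → k :=
  ![a 0 * b 0, a 0 * b 1 + a 1 * b 0, a 0 * b 2 + a 1 * b 1 + a 2 * b 0,
    a 0 * b 3 + a 1 * b 2 + a 2 * b 1 + a 3 * b 0, a 1 * b 3 + a 2 * b 2 + a 3 * b 1,
    a 2 * b 3 + a 3 * b 2, a 3 * b 3]

theorem toForm_mul_toForm (a b : Fin 4 → k) :
    toForm k 3 a * toForm k 3 b = toForm k 6 (mulCoeffs a b) := by
  simp only [toForm_three, toForm_six, mulCoeffs, Matrix.cons_val, map_add, map_mul]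
  ring

theorem mulCoeffs_eq_zero_of_X_pow_dvd {n : ℕ} {a b : Fin 4 → k}
    (h : X 1 ^ n ∣ toForm k 3 a * toForm k 3 b) {i : Fin 7} (hi : (i : ℕ) < n) :
    mulCoeffs a b i = 0 := by
  obtain ⟨p, hp⟩ := h
  rw [← congrFun (formCoeff_toForm 6 (mulCoeffs a b)) i, ← toForm_mul_toForm, hp, formCoeff,
    coeff_X_pow_mul_of_lt]
  simpa using hi

theorem matAct_mul (g : Matrix (Fin 2) (Fin 2) k) (p q : MvPolynomial (Fin 2) k) :
    matAct k g (p * q) = matAct k g p * matAct k g q :=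
  map_mul _ p q

theorem matAct_pow (g : Matrix (Fin 2) (Fin 2) k) (p : MvPolynomial (Fin 2) k) (n : ℕ) :
    matAct k g (p ^ n) = matAct k g p ^ n :=
  map_pow _ p n

theorem matAct_dvd_matAct (g : Matrix (Fin 2) (Fin 2) k) {p q : MvPolynomial (Fin 2) k}
    (h : p ∣ q) : matAct k g p ∣ matAct k g q :=
  map_dvd _ h

end CommSemiring

section CommRing

variable [CommRing k]

/-- The linear form `vX - uY`, vanishing at the point `(u : v)`. -/
def linForm (u v : k) : MvPolynomial (Fin 2) k := C v * X 0 - C u * X 1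

def HasQuadrupleRoot (a b : Fin 4 → k) : Prop :=
  ∃ u v : k, (u, v) ≠ (0, 0) ∧ linForm u v ^ 4 ∣ toForm k 3 a * toForm k 3 b

def InvariantsVanish (a b : Fin 4 → k) : Prop :=
  Dc a b = 0 ∧ Rc a b = 0 ∧ Hc a b = 0 ∧ Ic a b = 0

/-- Coefficients of `f(X + σY, Y)`. -/
def shear (σ : k) (a : Fin 4 → k) : Fin 4 → k :=
  ![a 0, a 1 + 3 * σ * a 0, a 2 + 2 * σ * a 1 + 3 * σ ^ 2 * a 0,
    a 3 + σ * a 2 + σ ^ 2 * a 1 + σ ^ 3 * a 0]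

theorem toForm_shear (σ : k) (a : Fin 4 → k) :
    toForm k 3 (shear σ a) = matAct k !![1, σ; 0, 1] (toForm k 3 a) := by
  simp only [toForm_three, shear, map_ofNat, matAct, map_add, map_mul, map_pow, aeval_X, aeval_C,
    algebraMap_eq, Matrix.of_apply, Matrix.cons_val', Matrix.cons_val, Matrix.cons_val_fin_one,
    C_0, C_1]
  ring

theorem toForm_reverse (a : Fin 4 → k) :
    toForm k 3 (reverse a) = matAct k !![0, 1; 1, 0] (toForm k 3 a) := by
  simp only [toForm_three, reverse, matAct, map_add, map_mul, map_pow, aeval_X, aeval_C,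
    algebraMap_eq, Matrix.of_apply, Matrix.cons_val', Matrix.cons_val, Matrix.cons_val_fin_one,
    C_0, C_1]
  ring

theorem matAct_shear_linForm (σ u v : k) :
    matAct k !![1, σ; 0, 1] (linForm u v) = linForm (u - σ * v) v := by
  simp only [linForm, matAct, map_sub, map_mul, aeval_X, aeval_C, algebraMap_eq, Matrix.of_apply,
    Matrix.cons_val', Matrix.cons_val, Matrix.cons_val_fin_one, C_0, C_1]
  ring

theorem matAct_reverse_linForm (u v : k) :
    matAct k !![0, 1; 1, 0] (linForm u v) = -linForm v u := by
  simp only [linForm, matAct, map_sub, map_mul, aeval_X, aeval_C, algebraMap_eq, Matrix.of_apply,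
    Matrix.cons_val', Matrix.cons_val, Matrix.cons_val_fin_one, C_0, C_1]
  ring

theorem shear_neg_shear (σ : k) (a : Fin 4 → k) : shear (-σ) (shear σ a) = a := by
  ext i; fin_cases i <;>
    simp only [shear, Fin.zero_eta, Fin.mk_one, Fin.reduceFinMk, Matrix.cons_val] <;> ring

theorem discCubic_shear (σ : k) (a : Fin 4 → k) : discCubic (shear σ a) = discCubic a := by
  simp only [discCubic, shear, Matrix.cons_val]
  ring

theorem Rc_shear (σ : k) (a b : Fin 4 → k) : Rc (shear σ a) (shear σ b) = Rc a b := by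
  simp only [Rc, shear, Matrix.cons_val]
  ring

theorem Hc_shear (σ : k) (a b : Fin 4 → k) : Hc (shear σ a) (shear σ b) = Hc a b := by
  simp only [Hc, shear, Matrix.cons_val]
  ring

theorem Ic_shear (σ : k) (a b : Fin 4 → k) : Ic (shear σ a) (shear σ b) = Ic a b := by
  simp only [Ic, shear, Matrix.cons_val]
  ring

theorem discCubic_reverse (a : Fin 4 → k) : discCubic (reverse a) = discCubic a := by
  simp only [discCubic, reverse, Matrix.cons_val]
  ring

theorem Rc_reverse (a b : Fin 4 → k) : Rc (reverse a) (reverse b) = -Rc a b := by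
  simp only [Rc, reverse, Matrix.cons_val]
  ring

theorem Hc_reverse (a b : Fin 4 → k) : Hc (reverse a) (reverse b) = -Hc a b := by
  simp only [Hc, reverse, Matrix.cons_val]
  ring

theorem Ic_reverse (a b : Fin 4 → k) : Ic (reverse a) (reverse b) = Ic a b := by
  simp only [Ic, reverse, Matrix.cons_val]
  ring

theorem Rc_comm (a b : Fin 4 → k) : Rc b a = -Rc a b := by
  simp only [Rc]; ring

theorem Hc_comm (a b : Fin 4 → k) : Hc b a = -Hc a b := by
  simp only [Hc]; ring

theorem Ic_comm (a b : Fin 4 → k) : Ic b a = Ic a b := by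
  simp only [Ic]; ring

variable {a b : Fin 4 → k}

theorem linForm_pow_dvd_shear {u v : k} {n : ℕ} (σ : k)
    (h : linForm u v ^ n ∣ toForm k 3 a * toForm k 3 b) :
    linForm (u - σ * v) v ^ n ∣ toForm k 3 (shear σ a) * toForm k 3 (shear σ b) := by
  rw [toForm_shear, toForm_shear, ← matAct_mul, ← matAct_shear_linForm, ← matAct_pow]
  exact matAct_dvd_matAct _ h

theorem linForm_pow_dvd_reverse {u v : k} {n : ℕ}
    (h : linForm u v ^ n ∣ toForm k 3 a * toForm k 3 b) :
    linForm v u ^ n ∣ toForm k 3 (reverse a) * toForm k 3 (reverse b) := by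
  rw [toForm_reverse, toForm_reverse]
  refine dvd_of_mul_left_dvd (a := (-1) ^ n) ?_
  rw [← neg_pow, ← matAct_reverse_linForm, ← matAct_mul, ← matAct_pow]
  exact matAct_dvd_matAct _ h

theorem HasQuadrupleRoot.shear (σ : k) (h : HasQuadrupleRoot a b) :
    HasQuadrupleRoot (shear σ a) (shear σ b) := by
  obtain ⟨u, v, huv, hdvd⟩ := h
  refine ⟨u - σ * v, v, fun h => huv ?_, linForm_pow_dvd_shear σ hdvd⟩
  obtain ⟨hu, rfl⟩ := Prod.mk.inj h
  simpa using hu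

theorem HasQuadrupleRoot.reverse (h : HasQuadrupleRoot a b) :
    HasQuadrupleRoot (reverse a) (reverse b) := by
  obtain ⟨u, v, huv, hdvd⟩ := h
  refine ⟨v, u, fun h => huv ?_, linForm_pow_dvd_reverse hdvd⟩
  obtain ⟨rfl, rfl⟩ := Prod.mk.inj h
  rfl

theorem hasQuadrupleRoot_shear_iff (σ : k) :
    HasQuadrupleRoot (shear σ a) (shear σ b) ↔ HasQuadrupleRoot a b :=
  ⟨fun h => by simpa only [shear_neg_shear] using h.shear (-σ), fun h => h.shear σ⟩

theorem hasQuadrupleRoot_reverse_iff :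
    HasQuadrupleRoot (reverse a) (reverse b) ↔ HasQuadrupleRoot a b :=
  ⟨fun h => by simpa only [reverse_reverse] using h.reverse, fun h => h.reverse⟩

theorem hasQuadrupleRoot_comm : HasQuadrupleRoot b a ↔ HasQuadrupleRoot a b := by
  simp only [HasQuadrupleRoot, mul_comm]

theorem invariantsVanish_shear_iff (σ : k) :
    InvariantsVanish (shear σ a) (shear σ b) ↔ InvariantsVanish a b := by
  simp only [InvariantsVanish, Dc, discCubic_shear, Rc_shear, Hc_shear, Ic_shear]

theorem invariantsVanish_reverse_iff :
    InvariantsVanish (reverse a) (reverse b) ↔ InvariantsVanish a b := by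
  simp only [InvariantsVanish, Dc, discCubic_reverse, Rc_reverse, Hc_reverse, Ic_reverse,
    neg_eq_zero]

theorem invariantsVanish_comm : InvariantsVanish b a ↔ InvariantsVanish a b := by
  simp only [InvariantsVanish, Dc, Rc_comm a b, Hc_comm a b, Ic_comm a b, neg_eq_zero, mul_comm]

/-- Coefficients of `(vX - uY)² (sX + tY)`. -/
def ofDoubleRoot (u v s t : k) : Fin 4 → k :=
  ![v ^ 2 * s, v ^ 2 * t - 2 * u * v * s, u ^ 2 * s - 2 * u * v * t, u ^ 2 * t]

theorem shear_ofDoubleRoot (σ u v s t : k) :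
    shear σ (ofDoubleRoot u v s t) = ofDoubleRoot (u - σ * v) v s (t + σ * s) := by
  ext i; fin_cases i <;>
    simp only [shear, ofDoubleRoot, Fin.zero_eta, Fin.mk_one, Fin.reduceFinMk, Matrix.cons_val] <;>
    ring

theorem reverse_ofDoubleRoot (u v s t : k) :
    reverse (ofDoubleRoot u v s t) = ofDoubleRoot v u t s := by
  ext i; fin_cases i <;>
    simp only [reverse, ofDoubleRoot, Fin.zero_eta, Fin.mk_one, Fin.reduceFinMk, Matrix.cons_val] <;>
    ring

end CommRing

section Field

variable [Field k] {a b : Fin 4 → k}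

theorem invariantsVanish_of_X_pow_four_dvd (h : X 1 ^ 4 ∣ toForm k 3 a * toForm k 3 b) :
    InvariantsVanish a b := by
  have c0 : a 0 * b 0 = 0 := mulCoeffs_eq_zero_of_X_pow_dvd h (i := 0) (by norm_num)
  have c1 : a 0 * b 1 + a 1 * b 0 = 0 := mulCoeffs_eq_zero_of_X_pow_dvd h (i := 1) (by norm_num)
  have c2 : a 0 * b 2 + a 1 * b 1 + a 2 * b 0 = 0 :=
    mulCoeffs_eq_zero_of_X_pow_dvd h (i := 2) (by norm_num)
  have c3 : a 0 * b 3 + a 1 * b 2 + a 2 * b 1 + a 3 * b 0 = 0 :=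
    mulCoeffs_eq_zero_of_X_pow_dvd h (i := 3) (by norm_num)
  by_cases ha0 : a 0 = 0
  swap
  · have hb0 : b 0 = 0 := by simpa [ha0] using c0
    have hb1 : b 1 = 0 := by simpa [ha0, hb0] using c1
    have hb2 : b 2 = 0 := by simpa [ha0, hb0, hb1] using c2
    have hb3 : b 3 = 0 := by simpa [ha0, hb0, hb1, hb2] using c3
    simp [InvariantsVanish, Dc, discCubic, Rc, Hc, Ic, hb0, hb1, hb2, hb3]
  by_cases ha1 : a 1 = 0
  swap
  · have hb0 : b 0 = 0 := by simpa [ha0, ha1] using c1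
    have hb1 : b 1 = 0 := by simpa [ha0, ha1, hb0] using c2
    have hb2 : b 2 = 0 := by simpa [ha0, ha1, hb0, hb1] using c3
    simp [InvariantsVanish, Dc, discCubic, Rc, Hc, Ic, ha0, hb0, hb1, hb2]
  by_cases ha2 : a 2 = 0
  swap
  · have hb0 : b 0 = 0 := by simpa [ha0, ha1, ha2] using c2
    have hb1 : b 1 = 0 := by simpa [ha0, ha1, ha2, hb0] using c3
    simp [InvariantsVanish, Dc, discCubic, Rc, Hc, Ic, ha0, ha1, hb0, hb1]
  by_cases ha3 : a 3 = 0
  · simp [InvariantsVanish, Dc, discCubic, Rc, Hc, Ic, ha0, ha1, ha2, ha3]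
  · have hb0 : b 0 = 0 := by simpa [ha0, ha1, ha2, ha3] using c3
    simp [InvariantsVanish, Dc, discCubic, Rc, Hc, Ic, ha0, ha1, ha2, hb0]

theorem invariantsVanish_of_hasQuadrupleRoot (h : HasQuadrupleRoot a b) : InvariantsVanish a b := by
  obtain ⟨u, v, huv, hdvd⟩ := h
  wlog hv : v = 0 generalizing u v a b
  · rw [← invariantsVanish_shear_iff (u / v), ← invariantsVanish_reverse_iff]
    refine this v 0 (by simpa using hv) ?_ rfl
    simpa [div_mul_cancel₀ u hv] using linForm_pow_dvd_reverse (linForm_pow_dvd_shear (u / v) hdvd)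
  subst hv
  have hu : u ≠ 0 := by simpa using huv
  apply invariantsVanish_of_X_pow_four_dvd
  rw [show linForm u 0 ^ 4 = C (u ^ 4) * X 1 ^ 4 by rw [linForm, map_zero, map_pow]; ring] at hdvd
  exact ((pow_ne_zero 4 hu).isUnit.map C).mul_left_dvd.1 hdvd

theorem eq_ofDoubleRoot_one {u : k} (e2 : a 2 = u ^ 2 * a 0 - 2 * u * (a 1 + 2 * u * a 0))
    (e3 : a 3 = u ^ 2 * (a 1 + 2 * u * a 0)) :
    a = ofDoubleRoot u 1 (a 0) (a 1 + 2 * u * a 0) := by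
  ext i; fin_cases i <;> simp [ofDoubleRoot, e2, e3]

/- `a₁² - 3a₀a₂` is the leading coefficient of the Hessian
`(a₁² - 3a₀a₂)X² + (a₁a₂ - 9a₀a₃)XY + (a₂² - 3a₁a₃)Y²` of the cubic; when `D_f = 0` the Hessian
is a multiple of the square of the repeated factor, so the double root is `(u : 1)` with
`u = (9a₀a₃ - a₁a₂) / (2(a₁² - 3a₀a₂))`. -/
theorem exists_eq_ofDoubleRoot_of_hessian_ne_zero (h2 : (2 : k) ≠ 0) (hd : discCubic a = 0)
    (hP : a 1 ^ 2 - 3 * a 0 * a 2 ≠ 0) : ∃ u, a = ofDoubleRoot u 1 (a 0) (a 1 + 2 * u * a 0) := by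
  unfold discCubic at hd
  set P := a 1 ^ 2 - 3 * a 0 * a 2
  set N := 9 * a 0 * a 3 - a 1 * a 2
  obtain ⟨u, hu⟩ : ∃ u, 2 * P * u = N := ⟨N / (2 * P), by field_simp⟩
  refine ⟨u, eq_ofDoubleRoot_one ?_ ?_⟩
  · apply mul_left_cancel₀ (pow_ne_zero 2 (mul_ne_zero h2 hP))
    linear_combination (-9 * a 0) * hd + (3 * a 0 * (2 * P * u + N) + 4 * P * a 1) * hu
  · apply mul_left_cancel₀ (pow_ne_zero 3 (mul_ne_zero h2 hP))
    linear_combination (54 * a 0 ^ 2 * a 3 - 2 * a 1 ^ 3) * hd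
      - (2 * P * a 1 * (N + 2 * P * u) + 2 * a 0 * (N ^ 2 + 2 * P * u * N + 4 * P ^ 2 * u ^ 2)) * hu

theorem exists_eq_ofDoubleRoot_of_hessian_eq_zero (h3 : (3 : k) ≠ 0) (hd : discCubic a = 0)
    (h0 : a 0 ≠ 0) (hP : a 1 ^ 2 - 3 * a 0 * a 2 = 0) :
    ∃ u, a = ofDoubleRoot u 1 (a 0) (a 1 + 2 * u * a 0) := by
  unfold discCubic at hd
  have h33 : 27 * a 0 ^ 2 * a 3 = a 1 ^ 3 := by
    have hsq : (27 * a 0 ^ 2 * a 3 - a 1 ^ 3) ^ 2 = 0 := by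
      linear_combination (-27 * a 0 ^ 2) * hd + (a 1 ^ 4 + 3 * a 0 * a 1 ^ 2 * a 2
        + 36 * a 0 ^ 2 * a 2 ^ 2 - 162 * a 0 ^ 2 * a 1 * a 3) * hP
    linear_combination pow_eq_zero_iff two_ne_zero |>.1 hsq
  obtain ⟨u, hu⟩ : ∃ u, 3 * a 0 * u + a 1 = 0 := ⟨-a 1 / (3 * a 0), by field_simp; ring⟩
  refine ⟨u, eq_ofDoubleRoot_one ?_ ?_⟩
  · apply mul_left_cancel₀ (mul_ne_zero h3 h0)
    linear_combination (3 * a 0 * u + a 1) * hu - hP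
  · apply mul_left_cancel₀ (mul_ne_zero (pow_ne_zero 3 h3) (pow_ne_zero 2 h0))
    linear_combination h33 - (2 * (3 * a 0 * u) ^ 2 + a 1 * (3 * a 0 * u) - a 1 ^ 2) * hu

theorem exists_eq_ofDoubleRoot (h2 : (2 : k) ≠ 0) (h3 : (3 : k) ≠ 0) (hd : discCubic a = 0) :
    ∃ u v s t, a = ofDoubleRoot u v s t := by
  by_cases hP : a 1 ^ 2 - 3 * a 0 * a 2 = 0
  · by_cases h0 : a 0 = 0
    · have h1 : a 1 = 0 := by simpa [h0] using hP
      refine ⟨1, 0, a 2, a 3, ?_⟩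
      ext i; fin_cases i <;> simp [ofDoubleRoot, h0, h1]
    · obtain ⟨u, hu⟩ := exists_eq_ofDoubleRoot_of_hessian_eq_zero h3 hd h0 hP
      exact ⟨u, 1, _, _, hu⟩
  · obtain ⟨u, hu⟩ := exists_eq_ofDoubleRoot_of_hessian_ne_zero h2 hd hP
    exact ⟨u, 1, _, _, hu⟩

theorem pair_induction_of_discCubic_eq_zero (h2 : (2 : k) ≠ 0) (h3 : (3 : k) ≠ 0)
    {P : (Fin 4 → k) → (Fin 4 → k) → Prop}
    (hshear : ∀ σ a b, P (shear σ a) (shear σ b) → P a b)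
    (hreverse : ∀ a b, P (reverse a) (reverse b) → P a b)
    (hcube : ∀ c b, P ![0, 0, 0, c] b) (hsq : ∀ c b, P ![0, 0, c, 0] b)
    (hd : discCubic a = 0) (b : Fin 4 → k) : P a b := by
  have root_Y : ∀ u s t b, P (ofDoubleRoot u 0 s t) b := by
    intro u s t b
    by_cases hs : s = 0
    · convert hcube (u ^ 2 * t) b using 2
      ext i; fin_cases i <;> simp [ofDoubleRoot, hs]
    · apply hshear (-(t / s))
      rw [shear_ofDoubleRoot, mul_zero, sub_zero, neg_mul, div_mul_cancel₀ t hs, add_neg_cancel]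
      convert hsq (u ^ 2 * s) (shear (-(t / s)) b) using 2
      ext i; fin_cases i <;> simp [ofDoubleRoot]
  obtain ⟨u, v, s, t, rfl⟩ := exists_eq_ofDoubleRoot h2 h3 hd
  by_cases hv : v = 0
  · subst hv
    exact root_Y u s t b
  · apply hshear (u / v)
    apply hreverse
    rw [shear_ofDoubleRoot, reverse_ofDoubleRoot, div_mul_cancel₀ u hv, sub_self]
    exact root_Y _ _ _ _

theorem hasQuadrupleRoot_of_X_pow_four_dvd (h : X 1 ^ 4 ∣ toForm k 3 a * toForm k 3 b) :
    HasQuadrupleRoot a b :=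
  ⟨1, 0, by simp, by
    rwa [show linForm (1 : k) 0 ^ 4 = X 1 ^ 4 by simp [linForm, Even.neg_pow (by decide : Even 4)]]⟩

theorem hasQuadrupleRoot_Y_cube (h3 : (3 : k) ≠ 0) (c : k) (hH : Hc ![0, 0, 0, c] b = 0) :
    HasQuadrupleRoot ![0, 0, 0, c] b := by
  have hcb : c * b 0 = 0 := by simpa [Hc, h3] using hH
  apply hasQuadrupleRoot_of_X_pow_four_dvd
  refine ⟨C c * (C (b 1) * X 0 ^ 2 + C (b 2) * X 0 * X 1 + C (b 3) * X 1 ^ 2), ?_⟩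
  have hC : C c * C (b 0) = (0 : MvPolynomial (Fin 2) k) := by rw [← C_mul, hcb, map_zero]
  simp only [toForm_three, Matrix.cons_val, map_zero]
  linear_combination (X 0 ^ 3 * X 1 ^ 3) * hC

theorem hasQuadrupleRoot_X_mul_Y_sq (h2 : (2 : k) ≠ 0) (c : k) (hH : Hc ![0, 0, c, 0] b = 0)
    (hI : Ic ![0, 0, c, 0] b = 0) (hR : Rc ![0, 0, c, 0] b = 0) :
    HasQuadrupleRoot ![0, 0, c, 0] b := by
  by_cases hc : c = 0
  · subst hc
    exact hasQuadrupleRoot_of_X_pow_four_dvd ⟨0, by simp [toForm_three]⟩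
  simp only [Hc, Ic, Rc, Matrix.cons_val] at hH hI hR
  have hb1 : b 1 = 0 := by simpa [hc] using hH
  have hb02 : 2 ^ 4 * c ^ 2 * (b 0 * b 2) = 0 := by linear_combination hI + 6 * c ^ 2 * b 1 * hb1
  have hb03 : c ^ 3 * (b 0 ^ 2 * b 3) = 0 := by linear_combination hR
  replace hb02 :=
    (mul_eq_zero.1 hb02).resolve_left (mul_ne_zero (pow_ne_zero 4 h2) (pow_ne_zero 2 hc))
  replace hb03 := (mul_eq_zero.1 hb03).resolve_left (pow_ne_zero 3 hc)
  by_cases hb0 : b 0 = 0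
  · apply hasQuadrupleRoot_of_X_pow_four_dvd
    refine ⟨C c * X 0 * (C (b 2) * X 0 + C (b 3) * X 1), ?_⟩
    simp only [toForm_three, Matrix.cons_val, map_zero, hb0, hb1]
    ring
  · have hb2 : b 2 = 0 := (mul_eq_zero.1 hb02).resolve_left hb0
    have hb3 : b 3 = 0 := (mul_eq_zero.1 hb03).resolve_left (pow_ne_zero 2 hb0)
    refine ⟨0, 1, by simp, C c * C (b 0) * X 1 ^ 2, ?_⟩
    simp only [linForm, toForm_three, Matrix.cons_val, map_zero, map_one, hb1, hb2, hb3]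
    ring

theorem hasQuadrupleRoot_of_invariantsVanish (h2 : (2 : k) ≠ 0) (h3 : (3 : k) ≠ 0)
    (h : InvariantsVanish a b) : HasQuadrupleRoot a b := by
  wlog hD : discCubic a = 0 generalizing a b
  · exact hasQuadrupleRoot_comm.1
      (this (invariantsVanish_comm.2 h) ((mul_eq_zero.1 h.1).resolve_left hD))
  revert h
  refine pair_induction_of_discCubic_eq_zero h2 h3
    (P := fun a b => InvariantsVanish a b → HasQuadrupleRoot a b) ?_ ?_ ?_ ?_ hD b
  · exact fun σ a b h hv =>
      (hasQuadrupleRoot_shear_iff σ).1 (h ((invariantsVanish_shear_iff σ).2 hv))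
  · exact fun a b h hv => hasQuadrupleRoot_reverse_iff.1 (h (invariantsVanish_reverse_iff.2 hv))
  · exact fun c b ⟨_, _, hH, _⟩ => hasQuadrupleRoot_Y_cube h3 c hH
  · exact fun c b ⟨_, hR, hH, hI⟩ => hasQuadrupleRoot_X_mul_Y_sq h2 c hH hI hR

end Field

end BinaryCubic

theorem cubic_pair_null_condition_general
    (k : Type*) [Field k]
    (h2 : (2 : k) ≠ 0) (h3 : (3 : k) ≠ 0)
    (a b : Fin 4 → k) :
    (toForm k 3 a * toForm k 3 b = 0 ∨
      ∃ u v : k, (u, v) ≠ (0, 0) ∧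
        (MvPolynomial.C v * MvPolynomial.X 0 - MvPolynomial.C u * MvPolynomial.X 1)^4 ∣
          toForm k 3 a * toForm k 3 b) ↔
    (Dc a b = 0 ∧ Rc a b = 0 ∧ Hc a b = 0 ∧ Ic a b = 0) := by
  open BinaryCubic in
  calc _ ↔ HasQuadrupleRoot a b :=
        or_iff_right_of_imp fun (h : toForm k 3 a * toForm k 3 b = 0) =>
          hasQuadrupleRoot_of_X_pow_four_dvd (h ▸ dvd_zero _)
    _ ↔ InvariantsVanish a b :=
        ⟨invariantsVanish_of_hasQuadrupleRoot, hasQuadrupleRoot_of_invariantsVanish h2 h3⟩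

/-- For binary cubics `f, g`: `fg = 0` or `fg` has a root of multiplicity at least 4
iff the invariants `D, R, H, I` all vanish on `(f,g)`. -/
theorem cubic_pair_null_condition
    (k : Type*) [Field k] [IsAlgClosed k]
    (h2 : (2 : k) ≠ 0) (h3 : (3 : k) ≠ 0)
    (a b : Fin 4 → k) :
    (toForm k 3 a * toForm k 3 b = 0 ∨
      ∃ u v : k, (u, v) ≠ (0, 0) ∧
        (MvPolynomial.C v * MvPolynomial.X 0 - MvPolynomial.C u * MvPolynomial.X 1)^4 ∣
          toForm k 3 a * toForm k 3 b) ↔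
    (Dc a b = 0 ∧ Rc a b = 0 ∧ Hc a b = 0 ∧ Ic a b = 0) :=
  cubic_pair_null_condition_general k h2 h3 a b
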